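/- arXiv:2502.09392 — 6 statements merged into one kernel-verified Lean document; each statement's English description precedes it below -/
import Mathlib

section
/- Assume neutral competition α = β = 1 and set D̄ := γ·D_max/D₀ − 1 > 0. Let (S,R) be a positive continuous solution of the model with constant dose D ≡ D_max on a neighborhood of the terminal time T*, satisfying S(t) + R(t) < K there, and suppose the total burden is strictly increasing at T*, i.e. (dN/dt)(T*) > 0. Then there exists T₀ < T* such that r_R·R(t) > D̄·r_S·S(t) for every t ∈ [T₀, T*]. -/
/-- under neutral competition `α = β = 1` and constant maximal dose
`D ≡ D_max` (so that `dS/dt = -rS·(1-(S+R)/K)·D̄·S - dS·S` with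
`D̄ = γ·D_max/D₀ - 1 > 0`), for a positive solution with `S + R < K` on a
neighborhood `[a, T*]` of the terminal time at which the total burden is
strictly increasing, there exists `T₀ < T*` such that
`rR·R(t) > D̄·rS·S(t)` for all `t ∈ [T₀, T*]`. -/
theorem stmt_3 (K rS rR dS dR γ D0 Dmax Dbar a Tstar : ℝ) (S R : ℝ → ℝ)
    (hK : 0 < K) (hrS : 0 < rS) (hrR : 0 < rR) (hdS : 0 < dS) (hdR : 0 < dR)
    (hD0 : 0 < D0) (hγ : 1 < γ)
    (hDbar_def : Dbar = γ * Dmax / D0 - 1) (hDbar : 0 < Dbar)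
    (ha : a < Tstar)
    (hSode : ∀ t ∈ Set.Icc a Tstar,
      HasDerivAt S (-(rS * (1 - (S t + R t) / K) * Dbar * S t) - dS * S t) t)
    (hRode : ∀ t ∈ Set.Icc a Tstar,
      HasDerivAt R (rR * (1 - (S t + R t) / K) * R t - dR * R t) t)
    (hSpos : ∀ t ∈ Set.Icc a Tstar, 0 < S t)
    (hRpos : ∀ t ∈ Set.Icc a Tstar, 0 < R t)
    (hcap : ∀ t ∈ Set.Icc a Tstar, S t + R t < K)
    (hNgrow : 0 <
      (-(rS * (1 - (S Tstar + R Tstar) / K) * Dbar * S Tstar) - dS * S Tstar)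
        + (rR * (1 - (S Tstar + R Tstar) / K) * R Tstar - dR * R Tstar)) :
    ∃ T0, a ≤ T0 ∧ T0 < Tstar ∧
      ∀ t ∈ Set.Icc T0 Tstar, rR * R t > Dbar * rS * S t := by
  have hT : Tstar ∈ Set.Icc a Tstar := ⟨le_of_lt ha, le_refl _⟩
  have hc : 0 < 1 - (S Tstar + R Tstar) / K := by
    have h := hcap Tstar hT
    rw [sub_pos, div_lt_one hK]; exact h
  have hgT : rR * R Tstar - Dbar * rS * S Tstar > 0 := by
    have h1 := hSpos Tstar hT
    have h2 := hRpos Tstar hT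
    nlinarith [mul_pos hdS h1, mul_pos hdR h2,
      mul_pos hc (mul_pos hrS h1), mul_pos hc (mul_pos hrR h2)]
  have hScont : ContinuousAt S Tstar := (hSode Tstar hT).continuousAt
  have hRcont : ContinuousAt R Tstar := (hRode Tstar hT).continuousAt
  have hgcont : ContinuousAt (fun t => rR * R t - Dbar * rS * S t) Tstar :=
    (hRcont.const_mul rR).sub (hScont.const_mul (Dbar * rS))
  have hev : ∀ᶠ t in nhds Tstar, 0 < rR * R t - Dbar * rS * S t :=
    hgcont.eventually (eventually_gt_nhds hgT)
  rw [Metric.eventually_nhds_iff] at hev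
  obtain ⟨ε, hε, hball⟩ := hev
  refine ⟨max a (Tstar - ε / 2), le_max_left _ _, ?_, ?_⟩
  · apply max_lt ha; linarith
  · intro t ht
    have h1 : Tstar - ε / 2 ≤ t := le_trans (le_max_right _ _) ht.1
    have h2 : dist t Tstar < ε := by
      rw [Real.dist_eq, abs_lt]; constructor <;> linarith [ht.2]
    have := hball h2
    linarith
end

section
/- Let S, R, K, r_S, r_R, d_S, d_R, D̄ be positive real numbers and α, β ≥ 1 with β ≤ α. Assume S + α·R < K and (1 − β) + (αβ − 1)·R/K ≤ 0. If −r_S·(1 − (S+αR)/K)·D̄·S − d_S·S + r_R·(1 − (βS+R)/K)·R − d_R·R > 0, then r_R·β·R > D̄·r_S·S. -/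
/-! The key identity turns the sign condition into `B ≤ β·A` for the two logistic factors
`A = 1 - (S+αR)/K > 0` and `B = 1 - (βS+R)/K`. Dropping the death terms, positivity of the
burden derivative gives `D̄·rS·S·A < rR·R·B ≤ rR·β·R·A`, and `A > 0` cancels. -/

theorem competition_factor_sub_mul_eq (S R K α β : ℝ) :
    (1 - (β * S + R) / K) - β * (1 - (S + α * R) / K) = (1 - β) + (α * β - 1) * R / K := by
  ring

theorem stmt_6_general (S R K rS rR dS dR Dbar α β : ℝ)
    (hS : 0 < S) (hR : 0 < R) (hK : 0 < K) (hrR : 0 < rR)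
    (hdS : 0 < dS) (hdR : 0 < dR)
    (hcap : S + α * R < K)
    (hsign : (1 - β) + (α * β - 1) * R / K ≤ 0)
    (h : -(rS * (1 - (S + α * R) / K) * Dbar * S) - dS * S
        + rR * (1 - (β * S + R) / K) * R - dR * R > 0) :
    rR * β * R > Dbar * rS * S := by
  have hdiff := competition_factor_sub_mul_eq S R K α β
  set A := 1 - (S + α * R) / K
  set B := 1 - (β * S + R) / K
  have hA : 0 < A := sub_pos.2 ((div_lt_one hK).2 hcap)
  have hBA : B ≤ β * A := by linarith
  have hgrowth : Dbar * rS * S * A < rR * R * B := by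
    linarith [mul_pos hdS hS, mul_pos hdR hR]
  have hkill : Dbar * rS * S * A < rR * β * R * A :=
    calc Dbar * rS * S * A < rR * R * B := hgrowth
      _ ≤ rR * R * (β * A) := mul_le_mul_of_nonneg_left hBA (by positivity)
      _ = rR * β * R * A := by ring
  exact (mul_lt_mul_iff_of_pos_right hA).mp hkill

/-- pointwise algebraic core of the terminal-growth lemma under
maximal dose with non-neutral competition `1 ≤ β ≤ α`: if the derivative of the
total burden `-rS·(1-(S+αR)/K)·D̄·S - dS·S + rR·(1-(βS+R)/K)·R - dR·R` is positive,
`S + α·R < K` and `(1-β) + (αβ-1)·R/K ≤ 0`, then `rR·β·R > D̄·rS·S`. -/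
theorem stmt_6 (S R K rS rR dS dR Dbar α β : ℝ)
    (hS : 0 < S) (hR : 0 < R) (hK : 0 < K) (hrS : 0 < rS) (hrR : 0 < rR)
    (hdS : 0 < dS) (hdR : 0 < dR) (hDbar : 0 < Dbar)
    (hβ1 : 1 ≤ β) (hα1 : 1 ≤ α) (hβα : β ≤ α)
    (hcap : S + α * R < K)
    (hsign : (1 - β) + (α * β - 1) * R / K ≤ 0)
    (h : -(rS * (1 - (S + α * R) / K) * Dbar * S) - dS * S
        + rR * (1 - (β * S + R) / K) * R - dR * R > 0) :
    rR * β * R > Dbar * rS * S :=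
  stmt_6_general S R K rS rR dS dR Dbar α β hS hR hK hrR hdS hdR hcap hsign h
end

section
/- Assume neutral competition α = β = 1, no treatment D ≡ 0, and equal death-to-growth ratios d_S/r_S = d_R/r_R = δ with 0 < δ < 1. Let (S,R) be a solution on [0, ∞) with S(0) > 0, R(0) > 0 and N(0) = S(0) + R(0) < K(1 − δ). Then for all t ≥ 0: S(t) > 0, R(t) > 0, N(t) < K(1 − δ), and both dS/dt(t) > 0 and dR/dt(t) > 0. -/
/-!
With `δ = d_S/r_S = d_R/r_R`, both per-capita growth rates are multiples of the gap
`u = K(1 - δ) - N`: `S' = (r_S/K) u S` and `R' = (r_R/K) u R`, while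
`u' = -((r_S S + r_R R)/K) u`. So each of `S`, `R`, `u` solves a scalar linear ODE `x' = a(t) x`
with continuous coefficient, and such a solution cannot reach `0` (by uniqueness it would
vanish identically). Hence `S, R, u > 0` for all time, and then both derivatives are positive.
-/

open Set

theorem eq_zero_of_hasDerivAt_mul_of_eq_zero {x a : ℝ → ℝ} {t₀ t₁ : ℝ} (h : t₀ ≤ t₁)
    (hx : ∀ t ∈ Icc t₀ t₁, HasDerivAt x (a t * x t) t) (ha : ContinuousOn a (Icc t₀ t₁))
    (h₁ : x t₁ = 0) : x t₀ = 0 := by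
  obtain ⟨C, hC⟩ := isCompact_Icc.exists_bound_of_continuousOn ha
  have hlip : ∀ t ∈ Ioc t₀ t₁, LipschitzOnWith C.toNNReal (a t * ·) univ := fun t ht =>
    ((lipschitzWith_smul (a t)).weaken
      (NNReal.le_toNNReal_of_coe_le (hC t (Ioc_subset_Icc_self ht)))).lipschitzOnWith
  have hx_cont : ContinuousOn x (Icc t₀ t₁) := fun t ht =>
    (hx t ht).continuousAt.continuousWithinAt
  exact ODE_solution_unique_of_mem_Icc_left (g := fun _ => 0) hlip hx_cont
    (fun t ht => (hx t (Ioc_subset_Icc_self ht)).hasDerivWithinAt) (fun _ _ => mem_univ _)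
    continuousOn_const
    (fun t _ => (hasDerivWithinAt_const t (Iic t) 0).congr_deriv (mul_zero (a t)).symm)
    (fun _ _ => mem_univ _) h₁ (left_mem_Icc.2 h)

theorem pos_of_hasDerivAt_mul {x a : ℝ → ℝ} {t₀ : ℝ}
    (hx : ∀ t ∈ Ici t₀, HasDerivAt x (a t * x t) t) (ha : ContinuousOn a (Ici t₀))
    (h₀ : 0 < x t₀) : ∀ t ∈ Ici t₀, 0 < x t := by
  intro t ht
  by_contra! hxt
  obtain ⟨s, hs, hxs⟩ : ∃ s ∈ Icc t₀ t, x s = 0 :=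
    intermediate_value_Icc' ht (fun u hu => (hx u hu.1).continuousAt.continuousWithinAt)
      ⟨hxt, h₀.le⟩
  exact h₀.ne' <| eq_zero_of_hasDerivAt_mul_of_eq_zero hs.1 (fun u hu => hx u hu.1)
    (ha.mono Icc_subset_Ici_self) hxs

theorem growth_sub_death_eq_div_mul_gap {K : ℝ} (hK : K ≠ 0) (r δ x N : ℝ) :
    r * (1 - N / K) * x - δ * r * x = r / K * (K * (1 - δ) - N) * x := by
  field_simp
  ring

theorem stmt_10_general (K rS rR dS dR δ : ℝ) (S R : ℝ → ℝ)
    (hK : 0 < K) (hrS : 0 < rS) (hrR : 0 < rR)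
    (hdS : dS = δ * rS) (hdR : dR = δ * rR)
    (hSode : ∀ t ∈ Set.Ici (0 : ℝ),
      HasDerivAt S (rS * (1 - (S t + R t) / K) * S t - dS * S t) t)
    (hRode : ∀ t ∈ Set.Ici (0 : ℝ),
      HasDerivAt R (rR * (1 - (S t + R t) / K) * R t - dR * R t) t)
    (hS0 : 0 < S 0) (hR0 : 0 < R 0) (hN0 : S 0 + R 0 < K * (1 - δ)) :
    ∀ t ∈ Set.Ici (0 : ℝ),
      0 < S t ∧ 0 < R t ∧ S t + R t < K * (1 - δ) ∧
      0 < rS * (1 - (S t + R t) / K) * S t - dS * S t ∧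
      0 < rR * (1 - (S t + R t) / K) * R t - dR * R t := by
  set u : ℝ → ℝ := fun t => K * (1 - δ) - (S t + R t)
  have hS_rate (t : ℝ) : rS * (1 - (S t + R t) / K) * S t - dS * S t = rS / K * u t * S t := by
    rw [hdS]
    exact growth_sub_death_eq_div_mul_gap hK.ne' rS δ (S t) (S t + R t)
  have hR_rate (t : ℝ) : rR * (1 - (S t + R t) / K) * R t - dR * R t = rR / K * u t * R t := by
    rw [hdR]
    exact growth_sub_death_eq_div_mul_gap hK.ne' rR δ (R t) (S t + R t)
  have hS_cont : ContinuousOn S (Ici 0) := fun t ht =>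
    (hSode t ht).continuousAt.continuousWithinAt
  have hR_cont : ContinuousOn R (Ici 0) := fun t ht =>
    (hRode t ht).continuousAt.continuousWithinAt
  have hu_cont : ContinuousOn u (Ici 0) := continuousOn_const.sub (hS_cont.add hR_cont)
  have hu_ode : ∀ t ∈ Ici (0 : ℝ), HasDerivAt u (-((rS * S t + rR * R t) / K) * u t) t := by
    intro t ht
    refine (((hSode t ht).add (hRode t ht)).const_sub (K * (1 - δ))).congr_deriv ?_
    rw [hS_rate, hR_rate]
    ring
  have hS_pos := pos_of_hasDerivAt_mul (a := fun t => rS / K * u t)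
    (fun t ht => (hSode t ht).congr_deriv (hS_rate t))
    (continuousOn_const.mul hu_cont) hS0
  have hR_pos := pos_of_hasDerivAt_mul (a := fun t => rR / K * u t)
    (fun t ht => (hRode t ht).congr_deriv (hR_rate t))
    (continuousOn_const.mul hu_cont) hR0
  have hu_pos := pos_of_hasDerivAt_mul hu_ode
    (((continuousOn_const.mul hS_cont).add (continuousOn_const.mul hR_cont)).div_const K).neg
    (sub_pos.2 hN0)
  intro t ht
  refine ⟨hS_pos t ht, hR_pos t ht, sub_pos.1 (hu_pos t ht), ?_, ?_⟩
  · rw [hS_rate]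
    exact mul_pos (mul_pos (div_pos hrS hK) (hu_pos t ht)) (hS_pos t ht)
  · rw [hR_rate]
    exact mul_pos (mul_pos (div_pos hrR hK) (hu_pos t ht)) (hR_pos t ht)

/-- under neutral competition `α = β = 1`, no treatment `D ≡ 0`, and
equal death-to-growth ratios `d_S/r_S = d_R/r_R = δ ∈ (0,1)`, every solution on
`[0,∞)` with `S(0) > 0`, `R(0) > 0` and `N(0) < K(1-δ)` satisfies, for all
`t ≥ 0`: `S(t) > 0`, `R(t) > 0`, `N(t) < K(1-δ)`, and both derivatives
`dS/dt(t) > 0` and `dR/dt(t) > 0`. -/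
theorem stmt_10 (K rS rR dS dR δ : ℝ) (S R : ℝ → ℝ)
    (hK : 0 < K) (hrS : 0 < rS) (hrR : 0 < rR)
    (hδ0 : 0 < δ) (hδ1 : δ < 1)
    (hdS : dS = δ * rS) (hdR : dR = δ * rR)
    (hSode : ∀ t ∈ Set.Ici (0 : ℝ),
      HasDerivAt S (rS * (1 - (S t + R t) / K) * S t - dS * S t) t)
    (hRode : ∀ t ∈ Set.Ici (0 : ℝ),
      HasDerivAt R (rR * (1 - (S t + R t) / K) * R t - dR * R t) t)
    (hS0 : 0 < S 0) (hR0 : 0 < R 0) (hN0 : S 0 + R 0 < K * (1 - δ)) :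
    ∀ t ∈ Set.Ici (0 : ℝ),
      0 < S t ∧ 0 < R t ∧ S t + R t < K * (1 - δ) ∧
      0 < rS * (1 - (S t + R t) / K) * S t - dS * S t ∧
      0 < rR * (1 - (S t + R t) / K) * R t - dR * R t :=
  stmt_10_general K rS rR dS dR δ S R hK hrS hrR hdS hdR hSode hRode hS0 hR0 hN0
end

section
/- Assume neutral competition α = β = 1, no treatment D ≡ 0, and equal death-to-growth ratios d_S/r_S = d_R/r_R = δ with 0 < δ < 1. Let (S,R) be a solution on [0, ∞) with S(0) > 0, R(0) > 0 and N(0) < K(1 − δ). Then N(t) is strictly increasing and N(t) → K(1 − δ) as t → ∞; that is, the trajectory converges to the line of coexistence equilibria S + R = K(1 − δ). -/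
open Set Filter Topology

/-!
With `δ = d_S/r_S = d_R/r_R` the total burden satisfies the logistic-type equation
`N' = g (K(1-δ) - N)` with `g = (r_S S + r_R R)/K`. Each of `S`, `R` and the gap `K(1-δ) - N`
solves a linear equation `y' = h y`, so by backward uniqueness it never reaches zero. Hence
`N' > 0`; then `g ≥ c := min(r_S, r_R) N(0)/K > 0`, and Grönwall's inequality gives
`K(1-δ) - N(t) ≤ (K(1-δ) - N(0)) e^{-ct}`.
-/

lemma eq_zero_at_left_of_hasDerivAt_mul_self_of_eq_zero_at_right {y h : ℝ → ℝ} {a b : ℝ}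
    (hab : a ≤ b) (hh : ContinuousOn h (Icc a b)) (hy : ∀ t ∈ Icc a b, HasDerivAt y (h t * y t) t)
    (hb : y b = 0) : y a = 0 := by
  obtain ⟨C, hC⟩ := isCompact_Icc.exists_bound_of_continuousOn hh
  have hmem : ∀ s ∈ Icc a b, a + b - s ∈ Icc a b := fun s hs =>
    ⟨by linarith [hs.2], by linarith [hs.1]⟩
  -- Reversing time turns the zero at `b` into the initial condition of a Grönwall estimate.
  set v : ℝ → ℝ := fun s => y (a + b - s)
  have hv : ∀ s ∈ Icc a b, HasDerivAt v (-(h (a + b - s) * v s)) s := fun s hs =>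
    (hy _ (hmem s hs)).comp_const_sub (a + b) s
  have hbound : ∀ s ∈ Ico a b, ‖-(h (a + b - s) * v s)‖ ≤ C * ‖v s‖ := fun s hs => by
    rw [norm_neg, norm_mul]
    exact mul_le_mul_of_nonneg_right (hC _ (hmem s (Ico_subset_Icc_self hs))) (norm_nonneg _)
  have := eq_zero_of_abs_deriv_le_mul_abs_self_of_eq_zero_right
    (fun s hs => (hv s hs).continuousAt.continuousWithinAt)
    (fun s hs => (hv s (Ico_subset_Icc_self hs)).hasDerivWithinAt) (by simp [v, hb]) hbound
    b ⟨hab, le_rfl⟩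
  simpa [v] using this

lemma pos_of_hasDerivAt_mul_self {y h : ℝ → ℝ} {a : ℝ} (hh : ContinuousOn h (Ici a))
    (hy : ∀ t ∈ Ici a, HasDerivAt y (h t * y t) t) (ha : 0 < y a) : ∀ t ∈ Ici a, 0 < y t := by
  intro t ht
  by_contra! hyt
  obtain ⟨s, hs, hys⟩ : (0 : ℝ) ∈ y '' Icc a t := intermediate_value_Icc' ht
    (fun x hx => (hy x hx.1).continuousAt.continuousWithinAt) ⟨hyt, ha.le⟩
  exact ha.ne' <| eq_zero_at_left_of_hasDerivAt_mul_self_of_eq_zero_at_right hs.1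
    (hh.mono Icc_subset_Ici_self) (fun x hx => hy x hx.1) hys

lemma sub_le_mul_exp_of_hasDerivAt_mul_sub {N g : ℝ → ℝ} {A c a : ℝ}
    (hN : ∀ t ∈ Ici a, HasDerivAt N (g t * (A - N t)) t) (hg : ∀ t ∈ Ici a, c ≤ g t)
    (hle : ∀ t ∈ Ici a, N t ≤ A) :
    ∀ t ∈ Ici a, A - N t ≤ (A - N a) * Real.exp (-c * (t - a)) := by
  intro t ht
  have hgap : ∀ s ∈ Icc a t, HasDerivAt (fun s => A - N s) (-(g s * (A - N s))) s :=
    fun s hs => (hN s hs.1).const_sub A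
  have := le_gronwallBound_of_liminf_deriv_right_le (K := -c) (ε := 0)
    (fun s hs => (hgap s hs).continuousAt.continuousWithinAt)
    (fun s hs r hr => by
      simpa only [slope_def_module, smul_eq_mul] using
        (hgap s (Ico_subset_Icc_self hs)).hasDerivWithinAt.liminf_right_slope_le hr)
    le_rfl
    (fun s hs => by nlinarith [hg s hs.1, hle s hs.1]) t ⟨ht, le_rfl⟩
  simpa [gronwallBound_ε0] using this

lemma tendsto_of_hasDerivAt_mul_sub {N g : ℝ → ℝ} {A c a : ℝ} (hc : 0 < c)
    (hN : ∀ t ∈ Ici a, HasDerivAt N (g t * (A - N t)) t) (hg : ∀ t ∈ Ici a, c ≤ g t)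
    (hle : ∀ t ∈ Ici a, N t ≤ A) : Tendsto N atTop (𝓝 A) := by
  have hdecay : Tendsto (fun t => (A - N a) * Real.exp (-c * (t - a))) atTop (𝓝 0) := by
    simpa [sub_eq_add_neg] using (Real.tendsto_exp_atBot.comp
      ((tendsto_atTop_add_const_right _ (-a) tendsto_id).const_mul_atTop_of_neg
        (neg_neg_of_pos hc))).const_mul (A - N a)
  have hgap : Tendsto (fun t => A - N t) atTop (𝓝 0) :=
    tendsto_of_tendsto_of_tendsto_of_le_of_le' tendsto_const_nhds hdecay
      (eventually_ge_atTop a |>.mono fun t ht => sub_nonneg.2 (hle t ht))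
      (eventually_ge_atTop a |>.mono fun t ht =>
        sub_le_mul_exp_of_hasDerivAt_mul_sub hN hg hle t ht)
  simpa using hgap.const_sub A

theorem stmt_11_general (K rS rR dS dR δ : ℝ) (S R : ℝ → ℝ)
    (hK : 0 < K) (hrS : 0 < rS) (hrR : 0 < rR)
    (hdS : dS = δ * rS) (hdR : dR = δ * rR)
    (hSode : ∀ t ∈ Set.Ici (0 : ℝ),
      HasDerivAt S (rS * (1 - (S t + R t) / K) * S t - dS * S t) t)
    (hRode : ∀ t ∈ Set.Ici (0 : ℝ),
      HasDerivAt R (rR * (1 - (S t + R t) / K) * R t - dR * R t) t)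
    (hS0 : 0 < S 0) (hR0 : 0 < R 0) (hN0 : S 0 + R 0 < K * (1 - δ)) :
    StrictMonoOn (fun t => S t + R t) (Set.Ici 0) ∧
      Filter.Tendsto (fun t => S t + R t) Filter.atTop (nhds (K * (1 - δ))) := by
  subst hdS hdR
  set N : ℝ → ℝ := fun t => S t + R t
  set g : ℝ → ℝ := fun t => (rS * S t + rR * R t) / K
  have hScont : ContinuousOn S (Ici 0) := fun t ht => (hSode t ht).continuousAt.continuousWithinAt
  have hRcont : ContinuousOn R (Ici 0) := fun t ht => (hRode t ht).continuousAt.continuousWithinAt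
  have hNode : ∀ t ∈ Ici (0 : ℝ), HasDerivAt N (g t * (K * (1 - δ) - N t)) t := fun t ht =>
    ((hSode t ht).add (hRode t ht)).congr_deriv (by simp only [N, g]; field_simp; ring)
  have hSpos : ∀ t ∈ Ici (0 : ℝ), 0 < S t :=
    pos_of_hasDerivAt_mul_self (h := fun t => rS * (1 - N t / K - δ)) (by fun_prop)
      (fun t ht => (hSode t ht).congr_deriv (by ring)) hS0
  have hRpos : ∀ t ∈ Ici (0 : ℝ), 0 < R t :=
    pos_of_hasDerivAt_mul_self (h := fun t => rR * (1 - N t / K - δ)) (by fun_prop)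
      (fun t ht => (hRode t ht).congr_deriv (by ring)) hR0
  have hgap : ∀ t ∈ Ici (0 : ℝ), 0 < K * (1 - δ) - N t :=
    pos_of_hasDerivAt_mul_self (h := fun t => -g t) (by fun_prop)
      (fun t ht => ((hNode t ht).const_sub _).congr_deriv (by ring)) (by simpa [N] using hN0)
  have hmono : StrictMonoOn N (Ici 0) := by
    refine strictMonoOn_of_hasDerivWithinAt_pos (convex_Ici 0)
      (fun t ht => (hNode t ht).continuousAt.continuousWithinAt)
      (fun t ht => (hNode t (interior_subset ht)).hasDerivWithinAt) fun t ht => ?_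
    have ht := interior_subset ht
    exact mul_pos (by have := hSpos t ht; have := hRpos t ht; positivity) (hgap t ht)
  have hg : ∀ t ∈ Ici (0 : ℝ), min rS rR * N 0 / K ≤ g t := fun t ht => by
    have hN : N 0 ≤ N t := hmono.monotoneOn self_mem_Ici ht ht
    have := hSpos t ht; have := hRpos t ht
    refine div_le_div_of_nonneg_right ?_ hK.le
    nlinarith [min_le_left rS rR, min_le_right rS rR, lt_min hrS hrR]
  exact ⟨hmono, tendsto_of_hasDerivAt_mul_sub (by positivity) hNode hg
    fun t ht => sub_nonneg.1 (hgap t ht).le⟩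

/-- under neutral competition `α = β = 1`, no treatment `D ≡ 0`, and
equal death-to-growth ratios `d_S/r_S = d_R/r_R = δ ∈ (0,1)`, for every solution
on `[0,∞)` with `S(0) > 0`, `R(0) > 0` and `N(0) < K(1-δ)`, the total burden
`N = S + R` is strictly increasing on `[0,∞)` and `N(t) → K(1-δ)` as `t → ∞`,
i.e. the trajectory converges to the line of coexistence equilibria. -/
theorem stmt_11 (K rS rR dS dR δ : ℝ) (S R : ℝ → ℝ)
    (hK : 0 < K) (hrS : 0 < rS) (hrR : 0 < rR)
    (hδ0 : 0 < δ) (hδ1 : δ < 1)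
    (hdS : dS = δ * rS) (hdR : dR = δ * rR)
    (hSode : ∀ t ∈ Set.Ici (0 : ℝ),
      HasDerivAt S (rS * (1 - (S t + R t) / K) * S t - dS * S t) t)
    (hRode : ∀ t ∈ Set.Ici (0 : ℝ),
      HasDerivAt R (rR * (1 - (S t + R t) / K) * R t - dR * R t) t)
    (hS0 : 0 < S 0) (hR0 : 0 < R 0) (hN0 : S 0 + R 0 < K * (1 - δ)) :
    StrictMonoOn (fun t => S t + R t) (Set.Ici 0) ∧
      Filter.Tendsto (fun t => S t + R t) Filter.atTop (nhds (K * (1 - δ))) :=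
  stmt_11_general K rS rR dS dR δ S R hK hrS hrR hdS hdR hSode hRode hS0 hR0 hN0
end

section
/- Consider the model under constant maximum tolerated dose D ≡ D₀ with γ > 1. Let (S,R) be a solution on [0, T] with S(t) > 0 and S(t) + α·R(t) ≤ K for all t ∈ [0, T]. Then dS/dt ≤ −d_S·S along the solution, and consequently S(t) ≤ S(0)·exp(−d_S·t) for all t ∈ [0, T]. -/
/-! Under the maximum tolerated dose the suppression factor `1 - γ` is negative while the logistic
factor `1 - (S + α R)/K` is nonnegative below capacity, so the growth term of `dS/dt` is `≤ 0`
and `dS/dt ≤ -d_S S`. Multiplying by the integrating factor `exp (d_S t)` gives a nonincreasing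
function, which is the exponential bound. -/

open Set Real

lemma logistic_mul_suppression_nonpos {r K γ n s : ℝ} (hK : 0 < K) (hr : 0 ≤ r) (hγ : 1 ≤ γ)
    (hs : 0 ≤ s) (hn : n ≤ K) : r * (1 - n / K) * (1 - γ) * s ≤ 0 := by
  have hlogistic : 0 ≤ 1 - n / K := sub_nonneg.2 ((div_le_one hK).2 hn)
  have hsuppression : 1 - γ ≤ 0 := sub_nonpos.2 hγ
  exact mul_nonpos_of_nonpos_of_nonneg
    (mul_nonpos_of_nonneg_of_nonpos (mul_nonneg hr hlogistic) hsuppression) hs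

lemma le_mul_exp_neg_of_hasDerivAt_le {f f' : ℝ → ℝ} {a b c : ℝ}
    (hf : ∀ t ∈ Icc a b, HasDerivAt f (f' t) t) (hf' : ∀ t ∈ Icc a b, f' t ≤ -c * f t) :
    ∀ t ∈ Icc a b, f t ≤ f a * exp (-c * (t - a)) := by
  set g : ℝ → ℝ := fun t => f t * exp (c * t)
  have hg : ∀ t ∈ Icc a b, HasDerivAt g ((f' t + c * f t) * exp (c * t)) t := fun t ht =>
    ((hf t ht).mul ((hasDerivAt_id t).const_mul c).exp).congr_deriv (by simp only [id]; ring)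
  have hanti : AntitoneOn g (Icc a b) := by
    refine antitoneOn_of_hasDerivWithinAt_nonpos (convex_Icc a b)
      (fun t ht => (hg t ht).continuousAt.continuousWithinAt)
      (fun t ht => (hg t (interior_subset ht)).hasDerivWithinAt) fun t ht => ?_
    have := hf' t (interior_subset ht)
    exact mul_nonpos_of_nonpos_of_nonneg (by linarith) (exp_pos _).le
  intro t ht
  have hgt : f t * exp (c * t) ≤ f a * exp (c * a) :=
    hanti ⟨le_rfl, ht.1.trans ht.2⟩ ht ht.1
  calc f t = f t * exp (c * t) * exp (-(c * t)) := by
        rw [mul_assoc, ← exp_add, add_neg_cancel, exp_zero, mul_one]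
    _ ≤ f a * exp (c * a) * exp (-(c * t)) := by gcongr
    _ = f a * exp (-c * (t - a)) := by rw [mul_assoc, ← exp_add]; ring_nf

theorem stmt_13_general (K rS dS α γ T : ℝ) (S R : ℝ → ℝ)
    (hK : 0 < K) (hrS : 0 < rS) (hγ : 1 < γ)
    (hSode : ∀ t ∈ Set.Icc 0 T,
      HasDerivAt S (rS * (1 - (S t + α * R t) / K) * (1 - γ) * S t - dS * S t) t)
    (hSpos : ∀ t ∈ Set.Icc 0 T, 0 < S t)
    (hcap : ∀ t ∈ Set.Icc 0 T, S t + α * R t ≤ K) :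
    (∀ t ∈ Set.Icc 0 T,
      rS * (1 - (S t + α * R t) / K) * (1 - γ) * S t - dS * S t ≤ -dS * S t) ∧
    (∀ t ∈ Set.Icc 0 T, S t ≤ S 0 * Real.exp (-dS * t)) := by
  have hdecay : ∀ t ∈ Icc 0 T,
      rS * (1 - (S t + α * R t) / K) * (1 - γ) * S t - dS * S t ≤ -dS * S t := fun t ht => by
    linarith [logistic_mul_suppression_nonpos hK hrS.le hγ.le (hSpos t ht).le (hcap t ht)]
  exact ⟨hdecay, fun t ht => by simpa using le_mul_exp_neg_of_hasDerivAt_le hSode hdecay t ht⟩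

/-- under constant maximum tolerated dose `D ≡ D₀` with `γ > 1`
(so the suppression factor is `1 - γ < 0`), any solution with `S > 0` and
`S + α·R ≤ K` on `[0,T]` satisfies `dS/dt ≤ -d_S·S` along the trajectory, and
consequently `S(t) ≤ S(0)·exp(-d_S·t)` for all `t ∈ [0,T]`. -/
theorem stmt_13 (K rS rR dS dR α β γ T : ℝ) (S R : ℝ → ℝ)
    (hK : 0 < K) (hrS : 0 < rS) (hrR : 0 < rR) (hdS : 0 < dS) (hdR : 0 < dR)
    (hα : 0 < α) (hβ : 0 < β) (hγ : 1 < γ) (hT : 0 ≤ T)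
    (hSode : ∀ t ∈ Set.Icc 0 T,
      HasDerivAt S (rS * (1 - (S t + α * R t) / K) * (1 - γ) * S t - dS * S t) t)
    (hSpos : ∀ t ∈ Set.Icc 0 T, 0 < S t)
    (hcap : ∀ t ∈ Set.Icc 0 T, S t + α * R t ≤ K) :
    (∀ t ∈ Set.Icc 0 T,
      rS * (1 - (S t + α * R t) / K) * (1 - γ) * S t - dS * S t ≤ -dS * S t) ∧
    (∀ t ∈ Set.Icc 0 T, S t ≤ S 0 * Real.exp (-dS * t)) :=
  stmt_13_general K rS dS α γ T S R hK hrS hγ hSode hSpos hcap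
end

section
/- Assume neutral competition α = β = 1, constant maximum tolerated dose D ≡ D₀ with γ > 1, and r_R > d_R. Let (S,R) be a solution on [0, ∞) with S(0) ≥ 0, R(0) ≥ 0 and S(0) + R(0) ≤ K. Then S(t) + R(t) ≤ K for all t ≥ 0, S(t) ≤ S(0)·exp(−d_S·t), and S(t) → 0 as t → ∞; i.e., under MTD the tumor evolves toward a state with no sensitive cells. -/
/-!
Positivity of `S` and `R` holds because each equation has the linear form `x' = c(t)·x`. Adding
the two equations gives `N' ≤ c(t)·(N - K)` with `c = -(r_S(1 - γ)S + r_R R)/K`, so `N - K`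
cannot become positive. Then `1 - N/K ≥ 0` and `γ > 1` make the logistic term of `S'` nonpositive,
so `S' ≤ -d_S S`, and Grönwall's inequality gives the exponential decay of `S`.
-/

open Set Filter Real

theorem le_mul_exp_of_hasDerivAt_le_mul {f f' : ℝ → ℝ} {K a b : ℝ}
    (hd : ∀ t ∈ Icc a b, HasDerivAt f (f' t) t) (hle : ∀ t ∈ Ico a b, f' t ≤ K * f t) :
    ∀ t ∈ Icc a b, f t ≤ f a * exp (K * (t - a)) := by
  intro t ht
  have h := le_gronwallBound_of_liminf_deriv_right_le (δ := f a) (ε := 0)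
    (fun x hx => (hd x hx).continuousAt.continuousWithinAt)
    (fun x hx _ hr => (hd x (Ico_subset_Icc_self hx)).hasDerivWithinAt.liminf_right_slope_le hr)
    le_rfl (fun x hx => by simpa using hle x hx) t ht
  rwa [gronwallBound_ε0] at h

theorem exists_eq_zero_forall_nonneg_Icc {f : ℝ → ℝ} {a b : ℝ} (hab : a ≤ b)
    (hf : ContinuousOn f (Icc a b)) (ha : f a ≤ 0) (hb : 0 ≤ f b) :
    ∃ t₀ ∈ Icc a b, f t₀ = 0 ∧ ∀ t ∈ Icc t₀ b, 0 ≤ f t := by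
  set Z := Icc a b ∩ f ⁻¹' {0}
  have hZ : IsCompact Z := isCompact_Icc.of_isClosed_subset
    (hf.preimage_isClosed_of_isClosed isClosed_Icc isClosed_singleton) inter_subset_left
  obtain ⟨s, hs, hfs⟩ := intermediate_value_Icc hab hf ⟨ha, hb⟩
  obtain ⟨ht₀, hft₀⟩ : sSup Z ∈ Z := hZ.sSup_mem ⟨s, hs, hfs⟩
  refine ⟨sSup Z, ht₀, hft₀, fun t ht => ?_⟩
  by_contra! hneg
  have hlt : sSup Z < t := ht.1.lt_of_ne (by rintro rfl; exact hneg.ne hft₀)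
  obtain ⟨u, hu, hfu⟩ := intermediate_value_Icc ht.2
    (hf.mono (Icc_subset_Icc (ht₀.1.trans ht.1) le_rfl)) ⟨hneg.le, hb⟩
  have : u ≤ sSup Z :=
    le_csSup hZ.bddAbove ⟨⟨ht₀.1.trans (ht.1.trans hu.1), hu.2⟩, hfu⟩
  linarith [hu.1]

theorem nonpos_of_hasDerivAt_le_mul {f f' c : ℝ → ℝ} {a : ℝ}
    (hd : ∀ t ∈ Ici a, HasDerivAt f (f' t) t) (hc : ContinuousOn c (Ici a))
    (hle : ∀ t ∈ Ici a, 0 ≤ f t → f' t ≤ c t * f t) (ha : f a ≤ 0) :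
    ∀ t ∈ Ici a, f t ≤ 0 := by
  intro t₁ ht₁
  by_contra! hpos
  obtain ⟨t₀, ht₀, hft₀, hnonneg⟩ := exists_eq_zero_forall_nonneg_Icc ht₁
    (fun t ht => (hd t ht.1).continuousAt.continuousWithinAt) ha hpos.le
  have hsub : Icc t₀ t₁ ⊆ Ici a := fun t ht => ht₀.1.trans ht.1
  obtain ⟨L, hL⟩ := isCompact_Icc.exists_bound_of_continuousOn (hc.mono hsub)
  have hbound : ∀ t ∈ Ico t₀ t₁, f' t ≤ L * f t := fun t ht =>
    calc f' t ≤ c t * f t := hle t (hsub (Ico_subset_Icc_self ht)) (hnonneg t ⟨ht.1, ht.2.le⟩)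
      _ ≤ L * f t := mul_le_mul_of_nonneg_right
          ((le_abs_self _).trans (hL t (Ico_subset_Icc_self ht))) (hnonneg t ⟨ht.1, ht.2.le⟩)
  have h := le_mul_exp_of_hasDerivAt_le_mul (fun t ht => hd t (hsub ht)) hbound t₁ ⟨ht₀.2, le_rfl⟩
  rw [hft₀, zero_mul] at h
  linarith

theorem nonneg_of_hasDerivAt_eq_mul {x c : ℝ → ℝ} {a : ℝ}
    (hd : ∀ t ∈ Ici a, HasDerivAt x (c t * x t) t) (hc : ContinuousOn c (Ici a))
    (ha : 0 ≤ x a) : ∀ t ∈ Ici a, 0 ≤ x t := by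
  have h := nonpos_of_hasDerivAt_le_mul (f := fun t => -x t) (fun t ht => (hd t ht).neg.congr_deriv
    (by ring)) hc (fun _ _ _ => le_rfl) (by simpa using ha)
  exact fun t ht => by simpa using h t ht

theorem stmt_14_general (K rS rR dS dR γ : ℝ) (S R : ℝ → ℝ)
    (hK : 0 < K) (hrS : 0 < rS) (hdS : 0 < dS) (hdR : 0 < dR)
    (hγ : 1 < γ)
    (hSode : ∀ t ∈ Set.Ici (0 : ℝ),
      HasDerivAt S (rS * (1 - (S t + R t) / K) * (1 - γ) * S t - dS * S t) t)
    (hRode : ∀ t ∈ Set.Ici (0 : ℝ),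
      HasDerivAt R (rR * (1 - (S t + R t) / K) * R t - dR * R t) t)
    (hS0 : 0 ≤ S 0) (hR0 : 0 ≤ R 0) (hN0 : S 0 + R 0 ≤ K) :
    (∀ t ∈ Set.Ici (0 : ℝ), S t + R t ≤ K ∧ S t ≤ S 0 * Real.exp (-dS * t)) ∧
      Filter.Tendsto S Filter.atTop (nhds 0) := by
  have hSc : ContinuousOn S (Ici 0) := fun t ht => (hSode t ht).continuousAt.continuousWithinAt
  have hRc : ContinuousOn R (Ici 0) := fun t ht => (hRode t ht).continuousAt.continuousWithinAt
  have hS : ∀ t ∈ Ici (0 : ℝ), 0 ≤ S t :=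
    nonneg_of_hasDerivAt_eq_mul (c := fun t => rS * (1 - (S t + R t) / K) * (1 - γ) - dS)
    (fun t ht => (hSode t ht).congr_deriv (by ring)) (by fun_prop) hS0
  have hR : ∀ t ∈ Ici (0 : ℝ), 0 ≤ R t :=
    nonneg_of_hasDerivAt_eq_mul (c := fun t => rR * (1 - (S t + R t) / K) - dR)
    (fun t ht => (hRode t ht).congr_deriv (by ring)) (by fun_prop) hR0
  have hN : ∀ t ∈ Ici (0 : ℝ), S t + R t ≤ K := by
    have h := nonpos_of_hasDerivAt_le_mul (f := fun t => S t + R t - K)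
      (c := fun t => -(rS * (1 - γ) * S t + rR * R t) / K)
      (fun t ht => ((hSode t ht).add (hRode t ht)).sub_const K) (by fun_prop)
      (fun t ht _ => by
        field_simp
        nlinarith [mul_nonneg hdS.le (hS t ht), mul_nonneg hdR.le (hR t ht)])
      (by linarith)
    exact fun t ht => by linarith [h t ht]
  have hSexp : ∀ t ∈ Ici (0 : ℝ), S t ≤ S 0 * exp (-dS * t) := by
    intro t ht
    refine (le_mul_exp_of_hasDerivAt_le_mul (fun u hu => hSode u hu.1) (fun u hu => ?_) t
      ⟨ht, le_rfl⟩).trans_eq (by rw [sub_zero])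
    have hlog : 0 ≤ 1 - (S u + R u) / K := by
      rw [sub_nonneg, div_le_one hK]; exact hN u hu.1
    have : rS * (1 - (S u + R u) / K) * (1 - γ) * S u ≤ 0 := mul_nonpos_of_nonpos_of_nonneg
      (mul_nonpos_of_nonneg_of_nonpos (by positivity) (by linarith)) (hS u hu.1)
    linarith
  refine ⟨fun t ht => ⟨hN t ht, hSexp t ht⟩, ?_⟩
  have hdecay : Tendsto (fun t => S 0 * exp (-dS * t)) atTop (nhds 0) := by
    simpa using (tendsto_exp_atBot.comp
      (tendsto_id.const_mul_atTop_of_neg (neg_lt_zero.2 hdS))).const_mul (S 0)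
  exact tendsto_of_tendsto_of_tendsto_of_le_of_le' tendsto_const_nhds hdecay
    (eventually_ge_atTop 0 |>.mono hS) (eventually_ge_atTop 0 |>.mono hSexp)

/-- under neutral competition `α = β = 1`, constant maximum
tolerated dose `D ≡ D₀` with `γ > 1`, and `r_R > d_R`, every solution on `[0,∞)`
with `S(0), R(0) ≥ 0` and `S(0)+R(0) ≤ K` satisfies `S(t)+R(t) ≤ K` and
`S(t) ≤ S(0)·exp(-d_S·t)` for all `t ≥ 0`, and `S(t) → 0` as `t → ∞`: under MTD
the tumor evolves toward a state with no sensitive cells. -/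
theorem stmt_14 (K rS rR dS dR γ : ℝ) (S R : ℝ → ℝ)
    (hK : 0 < K) (hrS : 0 < rS) (hrR : 0 < rR) (hdS : 0 < dS) (hdR : 0 < dR)
    (hγ : 1 < γ) (hrd : dR < rR)
    (hSode : ∀ t ∈ Set.Ici (0 : ℝ),
      HasDerivAt S (rS * (1 - (S t + R t) / K) * (1 - γ) * S t - dS * S t) t)
    (hRode : ∀ t ∈ Set.Ici (0 : ℝ),
      HasDerivAt R (rR * (1 - (S t + R t) / K) * R t - dR * R t) t)
    (hS0 : 0 ≤ S 0) (hR0 : 0 ≤ R 0) (hN0 : S 0 + R 0 ≤ K) :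
    (∀ t ∈ Set.Ici (0 : ℝ), S t + R t ≤ K ∧ S t ≤ S 0 * Real.exp (-dS * t)) ∧
      Filter.Tendsto S Filter.atTop (nhds 0) :=
  stmt_14_general K rS rR dS dR γ S R hK hrS hdS hdR hγ hSode hRode hS0 hR0 hN0
end
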